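/- Let 0 < λ < μ, let A be a nonnegative random variable with E[A] = 1/λ, let σ_A ∈ [0,1) satisfy σ_A = E[exp(−μ(1−σ_A)·A)], and let σ_D ∈ [0,1) satisfy σ_D = exp(−μ(1−σ_D)/λ). Then for every s > 0, the Laplace transform of the stationary waiting time is maximized by deterministic arrivals: μ(1−σ_D)/(μ(1−σ_D)+s) ≥ μ(1−σ_A)/(μ(1−σ_A)+s); equivalently, if W_D and W_A are exponentially distributed with rates μ(1−σ_D) and μ(1−σ_A) respectively, then E[e^{−sW_D}] ≥ E[e^{−sW_A}]. -/

import Mathlib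

/-!
By Jensen's inequality `exp (-μ (1 - σ_A) / λ) ≤ E[exp (-μ (1 - σ_A) A)] = σ_A`, so `σ_A` lies where
the strictly convex function `t ↦ exp (μ (t - 1) / λ) - t` is nonpositive. That function vanishes
at `σ_D` and at `1`, hence is positive below `σ_D`; thus `σ_D ≤ σ_A`, the waiting-time rate
`μ (1 - σ_D)` dominates `μ (1 - σ_A)`, and `θ ↦ θ / (θ + s)`, the Laplace transform at `s` of the
exponential law of rate `θ`, is increasing.
-/

open MeasureTheory Real Set

lemma integral_mul_exp_neg_mul_mul_exp_neg_mul_Ioi {b s : ℝ} (hbs : 0 < b + s) :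
    ∫ w in Ioi (0 : ℝ), b * exp (-b * w) * exp (-s * w) = b / (b + s) := by
  have hexp_add (w : ℝ) : b * exp (-b * w) * exp (-s * w) = b * exp (-(b + s) * w) := by
    rw [mul_assoc, ← exp_add]
    ring_nf
  simp_rw [hexp_add]
  rw [integral_const_mul, integral_exp_mul_Ioi (by linarith) 0]
  simp only [mul_zero, exp_zero, neg_div_neg_eq, mul_one_div]

lemma exp_integral_le_integral_exp {α : Type*} [MeasurableSpace α] {μ : Measure α}
    [IsProbabilityMeasure μ] {f : α → ℝ} (hf : Integrable f μ)
    (hexp : Integrable (fun x ↦ exp (f x)) μ) :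
    exp (∫ x, f x ∂μ) ≤ ∫ x, exp (f x) ∂μ :=
  convexOn_exp.map_integral_le continuous_exp.continuousOn isClosed_univ
    (ae_of_all _ fun _ ↦ mem_univ _) hf hexp

lemma integrable_exp_neg_mul_of_nonneg {α : Type*} [MeasurableSpace α] {μ : Measure α}
    [IsFiniteMeasure μ] {f : α → ℝ} (hf : AEStronglyMeasurable f μ) (hf₀ : ∀ᵐ x ∂μ, 0 ≤ f x)
    {c : ℝ} (hc : 0 ≤ c) : Integrable (fun x ↦ exp (-c * f x)) μ := by
  refine (integrable_const 1).mono' (continuous_exp.comp_aestronglyMeasurable (hf.const_mul _)) ?_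
  filter_upwards [hf₀] with x hx
  rw [norm_of_nonneg (exp_pos _).le, exp_le_one_iff]
  nlinarith

lemma strictConvexOn_exp_mul_add {c : ℝ} (hc : c ≠ 0) (d : ℝ) :
    StrictConvexOn ℝ univ (fun t ↦ exp (c * t + d)) := by
  refine ⟨convex_univ, fun x _ y _ hxy a b ha hb hab ↦ ?_⟩
  have hne : c * x + d ≠ c * y + d := by simpa [hc] using hxy
  convert strictConvexOn_exp.2 (mem_univ _) (mem_univ _) hne ha hb hab using 2
  simp only [smul_eq_mul]
  linear_combination -d * hab

lemma le_of_exp_mul_sub_one_le_self {c σ τ : ℝ} (hτ : τ < 1) (hτ_fix : τ = exp (c * (τ - 1)))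
    (hσ : exp (c * (σ - 1)) ≤ σ) : τ ≤ σ := by
  by_contra! hστ
  have hc : c ≠ 0 := by
    rintro rfl
    simp only [zero_mul, exp_zero] at hτ_fix
    linarith
  have hconv : StrictConvexOn ℝ univ (fun t ↦ exp (c * t + -c) - t) :=
    (strictConvexOn_exp_mul_add hc (-c)).sub_concaveOn (concaveOn_id convex_univ)
  have hτ_mem : τ ∈ openSegment ℝ σ 1 := by
    rw [openSegment_eq_Ioo (hστ.trans hτ)]
    exact ⟨hστ, hτ⟩
  have hlt := hconv.lt_on_openSegment (mem_univ σ) (mem_univ 1) (hστ.trans hτ).ne hτ_mem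
  simp only [← sub_eq_add_neg, ← mul_sub_one, sub_self, mul_zero, exp_zero] at hlt
  rw [← hτ_fix, sub_self, max_eq_right (sub_nonpos.2 hσ)] at hlt
  exact lt_irrefl 0 hlt

/-- In a stable G/M/1 queue with service rate `μ` and inter-arrival time `A ≥ 0` with mean
`1/λ`, if `σ_A` solves the fixed-point equation `σ_A = E[exp(−μ(1−σ_A)A)]` and `σ_D` solves
the deterministic fixed-point equation `σ_D = exp(−μ(1−σ_D)/λ)`, then for every `s > 0` the
Laplace transform of the stationary waiting time is maximized by deterministic arrivals:
`μ(1−σ_D)/(μ(1−σ_D)+s) ≥ μ(1−σ_A)/(μ(1−σ_A)+s)`; equivalently, for `W_D, W_A` exponential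
with rates `μ(1−σ_D)` and `μ(1−σ_A)`, `E[e^{−sW_D}] ≥ E[e^{−sW_A}]`. -/
theorem deterministic_arrivals_maximize_laplace
    {Ω : Type*} [MeasureSpace Ω] [IsProbabilityMeasure (volume : Measure Ω)]
    (lam μ : ℝ) (hlam : 0 < lam) (hlm : lam < μ)
    (A : Ω → ℝ) (hA : ∀ ω, 0 ≤ A ω) (hAint : Integrable A)
    (hmean : ∫ ω, A ω = 1 / lam)
    (σA : ℝ) (hσA : σA ∈ Set.Ico (0 : ℝ) 1)
    (hfixA : σA = ∫ ω, Real.exp (-(μ * (1 - σA)) * A ω))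
    (σD : ℝ) (hσD : σD ∈ Set.Ico (0 : ℝ) 1)
    (hfixD : σD = Real.exp (-(μ * (1 - σD)) / lam))
    (s : ℝ) (hs : 0 < s) :
    μ * (1 - σA) / (μ * (1 - σA) + s) ≤ μ * (1 - σD) / (μ * (1 - σD) + s) ∧
    (∫ w in Set.Ioi (0 : ℝ),
        (μ * (1 - σA)) * Real.exp (-(μ * (1 - σA)) * w) * Real.exp (-s * w)) ≤
      ∫ w in Set.Ioi (0 : ℝ),
        (μ * (1 - σD)) * Real.exp (-(μ * (1 - σD)) * w) * Real.exp (-s * w) := by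
  have hμ : 0 < μ := hlam.trans hlm
  have hθA : 0 < μ * (1 - σA) := mul_pos hμ (sub_pos.2 hσA.2)
  have hθD : 0 < μ * (1 - σD) := mul_pos hμ (sub_pos.2 hσD.2)
  have hjensen : exp (μ / lam * (σA - 1)) ≤ σA := by
    have := exp_integral_le_integral_exp (hAint.const_mul (-(μ * (1 - σA))))
      (integrable_exp_neg_mul_of_nonneg hAint.aestronglyMeasurable (ae_of_all _ hA) hθA.le)
    rw [integral_const_mul, hmean, ← hfixA] at this
    convert this using 2
    field_simp
    ring
  have hσ : σD ≤ σA := le_of_exp_mul_sub_one_le_self hσD.2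
    (hfixD.trans (by congr 1; field_simp; ring)) hjensen
  have hθ : μ * (1 - σA) ≤ μ * (1 - σD) := by gcongr
  have hlaplace : μ * (1 - σA) / (μ * (1 - σA) + s) ≤ μ * (1 - σD) / (μ * (1 - σD) + s) := by
    rw [div_le_div_iff₀ (by positivity) (by positivity)]
    nlinarith
  rw [integral_mul_exp_neg_mul_mul_exp_neg_mul_Ioi (by positivity),
    integral_mul_exp_neg_mul_mul_exp_neg_mul_Ioi (by positivity)]
  exact ⟨hlaplace, hlaplace⟩
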